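/- arXiv:2109.03407 — 5 statements merged into one kernel-verified Lean document; each statement's English description precedes it below -/
import Mathlib

section
/- For n ≥ 1, the alternating sum ∑_{k=0}^{n-1} (-q)^k [n-k]_q! · Stir_q(n, n-k) equals 1, where [m]_q = 1 + q + ... + q^{m-1}, [m]_q! = [1]_q [2]_q ⋯ [m]_q, and Stir_q(n,k) are the q-Stirling numbers of the second kind. -/
open Polynomial

/-- The `q`-integer `[k]_q = 1 + q + ⋯ + q^{k-1}`. -/
noncomputable def qint (k : ℕ) : Polynomial ℚ := ∑ i ∈ Finset.range k, X ^ i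

/-- The `q`-factorial `[m]_q! = [1]_q [2]_q ⋯ [m]_q`. -/
noncomputable def qfact (m : ℕ) : Polynomial ℚ := ∏ i ∈ Finset.range m, qint (i + 1)

/-- The `q`-Stirling numbers of the second kind, satisfying
`Stir_q(n,k) = Stir_q(n-1,k-1) + [k]_q Stir_q(n-1,k)` with `Stir_q(1,k) = δ_{k,1}`. -/
noncomputable def qStirling : ℕ → ℕ → Polynomial ℚ
  | 0, k => if k = 0 then 1 else 0
  | n + 1, k => (if k = 0 then 0 else qStirling n (k - 1)) + qint k * qStirling n k

/-! Put `A(n) = ∑_{j=0}^{n} (-q)^{n-j} [j]_q! Stir_q(n,j)`, so that `A(0) = 1`. Expanding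
`Stir_q(n+1,j)` by its recurrence and shifting the index of the first part gives
`A(n+1) = ∑_j (-q)^{n-j} [j]_q! Stir_q(n,j) ([j+1]_q - q [j]_q) = A(n)`,
because `[j+1]_q - q [j]_q = 1`. The theorem is `A(n)` read backwards, without the
term `j = 0`, which vanishes for `n ≥ 1`. -/

lemma qint_succ (k : ℕ) : qint (k + 1) = X * qint k + 1 := geom_sum_succ

lemma qfact_succ (m : ℕ) : qfact (m + 1) = qfact m * qint (m + 1) :=
  Finset.prod_range_succ _ _

lemma qStirling_succ_zero (n : ℕ) : qStirling (n + 1) 0 = 0 := by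
  simp [qStirling, qint]

lemma qStirling_eq_zero_of_lt {n k : ℕ} (h : n < k) : qStirling n k = 0 := by
  induction n generalizing k with
  | zero => simp [qStirling, Nat.pos_iff_ne_zero.mp h]
  | succ n ih =>
    simp [qStirling, Nat.ne_zero_of_lt h, ih (by omega : n < k - 1), ih (by omega : n < k)]

lemma sum_neg_X_pow_mul_qfact_mul_qStirling (n : ℕ) :
    ∑ j ∈ Finset.range (n + 1), (-X) ^ (n - j) * qfact j * qStirling n j = 1 := by
  induction n with
  | zero => simp [qfact, qStirling]
  | succ n ih =>
    have hsplit : ∀ j, (-X) ^ (n + 1 - j) * qfact j * qStirling (n + 1) j =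
        (-X) ^ (n + 1 - j) * qfact j * (if j = 0 then 0 else qStirling n (j - 1)) +
          (-X) ^ (n + 1 - j) * qfact j * qint j * qStirling n j := fun j => by
      rw [qStirling]; ring
    rw [Finset.sum_congr rfl fun j _ => hsplit j, Finset.sum_add_distrib,
      Finset.sum_range_succ', Finset.sum_range_succ _ (n + 1),
      qStirling_eq_zero_of_lt (Nat.lt_succ_self n)]
    simp only [Nat.add_sub_add_right, Nat.add_sub_cancel, Nat.add_one_ne_zero, if_false, if_true,
      mul_zero, add_zero, ← Finset.sum_add_distrib]
    rw [← ih]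
    refine Finset.sum_congr rfl fun j hj => ?_
    rw [Nat.sub_add_comm (Nat.lt_succ_iff.mp (Finset.mem_range.mp hj)), qfact_succ,
      qint_succ, pow_succ]
    ring

theorem qStirling_alternating_sum (n : ℕ) (hn : 1 ≤ n) :
    ∑ k ∈ Finset.range n, (-X) ^ k * qfact (n - k) * qStirling n (n - k) = 1 := by
  obtain ⟨m, rfl⟩ := Nat.exists_eq_add_of_le' hn
  have h := sum_neg_X_pow_mul_qfact_mul_qStirling (m + 1)
  rw [Finset.sum_range_succ', qStirling_succ_zero, mul_zero, add_zero,
    ← Finset.sum_range_reflect] at h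
  rw [← h]
  refine Finset.sum_congr rfl fun k hk => ?_
  have hk : k < m + 1 := Finset.mem_range.mp hk
  rw [show m + 1 - 1 - k + 1 = m + 1 - k by omega, Nat.sub_sub_self hk.le]
end

section
/- For each j, m ≥ 1 and n ≥ 1, the n polynomials ∂_{x_i} h_j(x_1^m,...,x_n^m) for i = 1,...,n have no common zero in ℂ^n other than the origin. -/
set_option linter.unusedSectionVars false


open MvPolynomial

section Aux

variable {σ : Type*} [Fintype σ] [DecidableEq σ]

lemma pderiv_msetprod_eq_zero (i : σ) (s : Multiset σ) (h : i ∉ s) :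
    pderiv i ((s.map (X : σ → MvPolynomial σ ℂ)).prod) = 0 := by
  induction s using Multiset.induction with
  | empty => simp
  | cons a t ih =>
    simp only [Multiset.mem_cons, not_or] at h
    simp [Multiset.map_cons, Multiset.prod_cons, pderiv_mul,
      pderiv_X_of_ne (Ne.symm h.1), ih h.2]

lemma euler_mset (s : Multiset σ) :
    ∑ i : σ, X i * pderiv i ((s.map (X : σ → MvPolynomial σ ℂ)).prod)
      = (Multiset.card s) • (s.map (X : σ → MvPolynomial σ ℂ)).prod := by
  induction s using Multiset.induction with
  | empty => simp
  | cons a t ih =>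
    have hXa : ∑ i : σ, X i * pderiv i (X a : MvPolynomial σ ℂ) = X a := by
      rw [Finset.sum_eq_single a]
      · simp
      · intro b _ hb; simp [pderiv_X_of_ne (Ne.symm hb)]
      · intro h; exact absurd (Finset.mem_univ a) h
    have hsplit : ∀ i : σ, X i * pderiv i ((X a : MvPolynomial σ ℂ) * (t.map X).prod)
        = X i * pderiv i (X a) * (t.map X).prod + X a * (X i * pderiv i (t.map X).prod) := by
      intro i; rw [pderiv_mul]; ring
    simp only [Multiset.map_cons, Multiset.prod_cons, hsplit]
    rw [Finset.sum_add_distrib, ← Finset.sum_mul, hXa, ← Finset.mul_sum, ih,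
      mul_smul_comm, Multiset.card_cons, add_smul, one_smul, add_comm]

lemma euler_hsymm (j : ℕ) :
    ∑ i : σ, X i * pderiv i (hsymm σ ℂ j) = j • hsymm σ ℂ j := by
  rw [hsymm]
  simp only [map_sum, Finset.mul_sum]
  rw [Finset.sum_comm, Finset.smul_sum]
  refine Finset.sum_congr rfl fun s _ => ?_
  rw [euler_mset, s.2]

lemma pderiv_hsymm_succ (i : σ) (j : ℕ) :
    pderiv i (hsymm σ ℂ (j + 1)) = hsymm σ ℂ j + X i * pderiv i (hsymm σ ℂ j) := by
  rw [hsymm, hsymm, map_sum]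
  have himg : ∀ s ∈ (Finset.univ : Finset (Sym σ (j + 1))),
      s ∉ Finset.univ.image (fun t : Sym σ j => i ::ₛ t) →
      pderiv i ((s.1.map (X : σ → MvPolynomial σ ℂ)).prod) = 0 := by
    intro s _ hs
    apply pderiv_msetprod_eq_zero
    intro hmem
    exact hs (Finset.mem_image.mpr ⟨s.erase i hmem, Finset.mem_univ _, Sym.cons_erase hmem⟩)
  have hsub : (∑ s : Sym σ (j + 1), pderiv i ((s.1.map (X : σ → MvPolynomial σ ℂ)).prod))
      = ∑ s ∈ Finset.univ.image (fun t : Sym σ j => i ::ₛ t),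
          pderiv i ((s.1.map (X : σ → MvPolynomial σ ℂ)).prod) :=
    (Finset.sum_subset (Finset.subset_univ _) himg).symm
  rw [hsub, Finset.sum_image (fun a _ b _ h => (Sym.cons_inj_right i a b).mp h)]
  have hterm : ∀ t : Sym σ j,
      pderiv i (((i ::ₛ t : Sym σ (j + 1)).1.map (X : σ → MvPolynomial σ ℂ)).prod)
        = (t.1.map (X : σ → MvPolynomial σ ℂ)).prod
          + X i * pderiv i ((t.1.map (X : σ → MvPolynomial σ ℂ)).prod) := by
    intro t
    have hc : (i ::ₛ t : Sym σ (j + 1)).1 = i ::ₘ t.1 := rfl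
    rw [hc, Multiset.map_cons, Multiset.prod_cons, pderiv_mul, pderiv_X_self, one_mul]
  simp only [hterm]
  rw [Finset.sum_add_distrib, ← Finset.mul_sum, ← map_sum]

lemma keyA (j : ℕ) (hj : 1 ≤ j) (w : σ → ℂ)
    (hw : ∀ i, w i * eval w (pderiv i (hsymm σ ℂ j)) = 0) : w = 0 := by
  induction j with
  | zero => omega
  | succ j ih =>
    rcases Nat.eq_zero_or_pos j with hj0 | hj1
    · subst hj0
      funext i
      have h1 := hw i
      rw [hsymm_one, map_sum] at h1
      have : ∀ k : σ, pderiv i (X k : MvPolynomial σ ℂ) = if k = i then 1 else 0 := by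
        intro k
        by_cases hk : k = i
        · subst hk; simp
        · simp [pderiv_X_of_ne hk, hk]
      simp only [this] at h1
      rw [Finset.sum_ite_eq' Finset.univ i (fun _ => (1 : MvPolynomial σ ℂ))] at h1
      simpa using h1
    · by_cases hS : ∀ i, w i = 0
      · funext i; exact hS i
      push_neg at hS
      set S : Finset σ := Finset.univ.filter (fun i => w i ≠ 0) with hSdef
      have hSne : S.Nonempty := by
        obtain ⟨i, hi⟩ := hS
        exact ⟨i, by simp [hSdef, hi]⟩
      set A : ℂ := eval w (hsymm σ ℂ j) with hAdef
      set d : σ → ℂ := fun i => eval w (pderiv i (hsymm σ ℂ j)) with hddef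
      have hA : ∀ i ∈ S, A + w i * d i = 0 := by
        intro i hi
        have hwi : w i ≠ 0 := (Finset.mem_filter.mp hi).2
        have h0 : eval w (pderiv i (hsymm σ ℂ (j + 1))) = 0 :=
          (mul_eq_zero.mp (hw i)).resolve_left hwi
        rw [pderiv_hsymm_succ] at h0
        simpa [hAdef, hddef] using h0
      have heuler : ∑ i : σ, w i * d i = (j : ℂ) * A := by
        have := congrArg (eval w) (euler_hsymm (σ := σ) j)
        simpa [hddef, hAdef, Finset.smul_sum] using this
      have hzero_off : ∀ i ∈ Finset.univ, i ∉ S → w i * d i = 0 := by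
        intro i _ hi
        have : w i = 0 := by
          by_contra h
          exact hi (Finset.mem_filter.mpr ⟨Finset.mem_univ i, h⟩)
        simp [this]
      have hsumS : ∑ i ∈ S, w i * d i = (j : ℂ) * A := by
        rw [← heuler]
        exact Finset.sum_subset (Finset.subset_univ S) hzero_off
      have hcard : (S.card : ℂ) * A + (j : ℂ) * A = 0 := by
        have := Finset.sum_congr rfl hA
        rw [Finset.sum_add_distrib, Finset.sum_const, hsumS, nsmul_eq_mul] at this
        simpa using this
      have hA0 : A = 0 := by
        have hc : ((S.card : ℂ) + (j : ℂ)) ≠ 0 := by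
          have h1 : (1 : ℕ) ≤ S.card := Finset.card_pos.mpr hSne
          have : ((S.card + j : ℕ) : ℂ) ≠ 0 := Nat.cast_ne_zero.mpr (by omega)
          simpa using this
        have := hcard
        rw [← add_mul] at this
        exact (mul_eq_zero.mp this).resolve_left hc
      have hall : ∀ i, w i * d i = 0 := by
        intro i
        by_cases hi : i ∈ S
        · have := hA i hi; rw [hA0, zero_add] at this; exact this
        · exact hzero_off i (Finset.mem_univ i) hi
      exact ih hj1 hall

end Aux

/-- `H j = h_j(x_1^m, …, x_n^m)` over `ℂ`. -/
noncomputable def HpowC (n m j : ℕ) : MvPolynomial (Fin n) ℂ :=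
  aeval (fun k : Fin n => (X k : MvPolynomial (Fin n) ℂ) ^ m) (hsymm (Fin n) ℂ j)

lemma pderiv_aeval_pow {n : ℕ} (m : ℕ) (i : Fin n) (P : MvPolynomial (Fin n) ℂ) :
    pderiv i (aeval (fun k : Fin n => (X k : MvPolynomial (Fin n) ℂ) ^ m) P)
      = aeval (fun k : Fin n => (X k : MvPolynomial (Fin n) ℂ) ^ m) (pderiv i P)
        * ((m : MvPolynomial (Fin n) ℂ) * X i ^ (m - 1)) := by
  induction P using MvPolynomial.induction_on with
  | C a => simp
  | add p q hp hq =>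
    simp only [map_add, hp, hq]
    ring
  | mul_X p k hp =>
    by_cases hk : k = i
    · subst hk
      simp only [map_mul, aeval_X, pderiv_mul, hp, pderiv_pow, pderiv_X_self, mul_one,
        map_add, map_pow]
      ring
    · simp only [map_mul, aeval_X, pderiv_mul, hp, pderiv_pow, pderiv_X_of_ne hk, mul_zero,
        add_zero, zero_mul, map_add]
      ring

lemma eval_aeval_pow {n m : ℕ} (z : Fin n → ℂ) (Q : MvPolynomial (Fin n) ℂ) :
    eval z (aeval (fun k : Fin n => (X k : MvPolynomial (Fin n) ℂ) ^ m) Q)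
      = eval (fun k => z k ^ m) Q := by
  induction Q using MvPolynomial.induction_on with
  | C a => simp
  | add p q hp hq => simp only [map_add, hp, hq]
  | mul_X p k hp => simp only [map_mul, map_pow, aeval_X, eval_X, hp]

/-- The `n` partial derivatives `∂_{x_i} h_j(x_1^m,…,x_n^m)` have no common zero in
`ℂ^n` other than the origin. -/
theorem pderiv_Hpow_no_common_zero (n m j : ℕ) (hm : 1 ≤ m) (hj : 1 ≤ j)
    (z : Fin n → ℂ) (hz : ∀ i : Fin n, eval z (pderiv i (HpowC n m j)) = 0) :
    z = 0 := by
  set w : Fin n → ℂ := fun k => z k ^ m with hwdef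
  have hw : ∀ i, w i * eval w (pderiv i (hsymm (Fin n) ℂ j)) = 0 := by
    intro i
    have h1 := hz i
    rw [HpowC, pderiv_aeval_pow, map_mul, eval_aeval_pow] at h1
    have h2 : eval z ((m : MvPolynomial (Fin n) ℂ) * X i ^ (m - 1))
        = (m : ℂ) * z i ^ (m - 1) := by simp
    rw [h2] at h1
    rcases mul_eq_zero.mp h1 with h | h
    · rw [hwdef]; simp [h]
    · rcases mul_eq_zero.mp h with h' | h'
      · exact absurd h' (Nat.cast_ne_zero.mpr (by omega))
      · by_cases hm1 : m = 1
        · subst hm1; simp at h'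
        · have : z i = 0 := pow_eq_zero_iff (by omega : m - 1 ≠ 0) |>.mp h'
          simp [hwdef, this, zero_pow (by omega : m ≠ 0)]
  have := keyA j hj w hw
  funext i
  have hwi : z i ^ m = 0 := congrFun this i
  exact pow_eq_zero_iff (by omega : m ≠ 0) |>.mp hwi
end

section
/- The number of monomials x_1^{a_1} ⋯ x_n^{a_n} such that there exists j ∈ {1,...,n} with 0 ≤ a_i < i·m for all i < j, 0 ≤ a_j < m/p, and 0 ≤ a_i − m/p < (i−1)·m for all i > j, equals m^n · n! / p, for positive integers m, p, n with p dividing m. -/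
/-!
Splitting by the index `j` of the existential, `A(m,p,n)` is a disjoint union of `n` boxes
(they are separated by whether `a_j < m/p`). With `q = m/p`, the box for `j` has side lengths
`m, 2m, …, jm, q, (j+1)m, …, (n-1)m` (indexing from `0`), so it has `q · m^(n-1) · (n-1)!`
points, independently of `j`.
Summing over `j` and using `p · q = m` gives `m^n · n!`.
-/

open Finset

/-- Membership in the Artin basis index set `A(m,p,n)` of `G(m,p,n)`: (`i` is 0-indexed here,
so the 1-indexed row `i` of the paper has index `i-1` and bound `a_i < i·m` reads
`a i < (i+1)·m`, etc.): there exists `j` with `a_i < i·m` for `i < j`, `a_j < m/p`,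
and `m/p ≤ a_i < m/p + (i-1)·m` for `i > j`. -/
def ArtinMem (m p n : ℕ) (a : Fin n → ℕ) : Prop :=
  ∃ j : Fin n,
    (∀ i : Fin n, i < j → a i < (i.1 + 1) * m) ∧
    a j < m / p ∧
    (∀ i : Fin n, j < i → m / p ≤ a i ∧ a i < m / p + i.1 * m)

open Classical in
/-- The Artin basis index set as a finite set of exponent tuples. -/
noncomputable def ArtinSet (m p n : ℕ) : Finset (Fin n → ℕ) :=
  (Fintype.piFinset fun i : Fin n => Finset.range ((i.1 + 1) * m)).filter (ArtinMem m p n)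

open Function

section ArtinBox

variable {n : ℕ} (m q : ℕ)

def artinFactor (j i : Fin n) : Finset ℕ :=
  if i < j then range ((i.1 + 1) * m)
  else if i = j then range q
  else Ico q (q + i.1 * m)

def artinBox (j : Fin n) : Finset (Fin n → ℕ) :=
  Fintype.piFinset (artinFactor m q j)

theorem mem_artinBox {j : Fin n} {a : Fin n → ℕ} :
    a ∈ artinBox m q j ↔
      (∀ i, i < j → a i < (i.1 + 1) * m) ∧ a j < q ∧
        ∀ i, j < i → q ≤ a i ∧ a i < q + i.1 * m := by
  simp only [artinBox, Fintype.mem_piFinset, artinFactor]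
  constructor
  · intro h
    refine ⟨fun i hi => ?_, ?_, fun i hi => ?_⟩
    · simpa [hi] using h i
    · simpa using h j
    · simpa [hi.not_gt, hi.ne'] using h i
  · rintro ⟨hlt, hj, hgt⟩ i
    rcases lt_trichotomy i j with hi | rfl | hi
    · simpa [hi] using hlt i hi
    · simpa using hj
    · simpa [hi.not_gt, hi.ne'] using hgt i hi

theorem artinBox_subset {q : ℕ} (hqm : q ≤ m) (j : Fin n) :
    artinBox m q j ⊆ Fintype.piFinset fun i : Fin n => range ((i.1 + 1) * m) := by
  refine Fintype.piFinset_subset _ _ fun i => ?_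
  unfold artinFactor
  split_ifs with hlt heq
  · exact Subset.rfl
  · exact range_subset_range.2 (hqm.trans (Nat.le_mul_of_pos_left m i.1.succ_pos))
  · intro x hx
    simp only [mem_Ico, mem_range] at hx ⊢
    nlinarith

theorem pairwise_disjoint_artinBox :
    Pairwise (Disjoint on (artinBox m q : Fin n → Finset (Fin n → ℕ))) := by
  refine Pairwise.of_lt fun j j' hlt => ?_
  refine disjoint_left.2 fun a ha ha' => ?_
  have := ((mem_artinBox m q).1 ha).2.2 j' hlt
  have := ((mem_artinBox m q).1 ha').2.1
  omega

theorem card_artinFactor_succAbove (j : Fin (n + 1)) (k : Fin n) :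
    (artinFactor m q j (j.succAbove k)).card = (k.1 + 1) * m := by
  rcases lt_or_ge k.castSucc j with hk | hk
  · rw [Fin.succAbove_of_castSucc_lt _ _ hk, artinFactor, if_pos hk, card_range, Fin.val_castSucc]
  · have hlt : j < k.succ := hk.trans_lt k.castSucc_lt_succ
    rw [Fin.succAbove_of_le_castSucc _ _ hk, artinFactor, if_neg hlt.not_gt, if_neg hlt.ne',
      Nat.card_Ico, Nat.add_sub_cancel_left, Fin.val_succ]

theorem card_artinBox (j : Fin (n + 1)) :
    (artinBox m q j).card = q * (m ^ n * n.factorial) := by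
  rw [artinBox, Fintype.card_piFinset, Fin.prod_univ_succAbove _ j]
  have hj : (artinFactor m q j j).card = q := by simp [artinFactor]
  simp only [hj, card_artinFactor_succAbove]
  rw [Fin.prod_univ_eq_prod_range (fun k => (k + 1) * m), prod_mul_distrib,
    prod_range_add_one_eq_factorial, prod_const, card_range, mul_comm (n.factorial)]

end ArtinBox

theorem artinSet_eq_biUnion_artinBox (m p n : ℕ) :
    ArtinSet m p n = univ.biUnion (artinBox m (m / p)) := by
  classical
  have hsub : univ.biUnion (artinBox m (m / p)) ⊆
      Fintype.piFinset fun i : Fin n => range ((i.1 + 1) * m) :=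
    biUnion_subset.2 fun j _ => artinBox_subset m (Nat.div_le_self m p) j
  have hmem : ∀ a, ArtinMem m p n a ↔ a ∈ univ.biUnion (artinBox m (m / p)) := by
    simp [ArtinMem, mem_artinBox]
  rw [ArtinSet, filter_congr fun a _ => hmem a, filter_mem_eq_inter, inter_eq_right.2 hsub]

theorem artinSet_card_general (m p n : ℕ) (hn : 1 ≤ n) (hpm : p ∣ m) :
    (ArtinSet m p n).card * p = m ^ n * n.factorial := by
  obtain ⟨n, rfl⟩ := Nat.exists_eq_add_of_le' hn
  rw [artinSet_eq_biUnion_artinBox, card_biUnion ((pairwise_disjoint_artinBox m _).set_pairwise _)]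
  simp only [card_artinBox, sum_const, card_univ, Fintype.card_fin, smul_eq_mul]
  calc (n + 1) * (m / p * (m ^ n * n.factorial)) * p
      = (p * (m / p)) * m ^ n * ((n + 1) * n.factorial) := by ring
    _ = m ^ (n + 1) * (n + 1).factorial := by
      rw [Nat.mul_div_cancel' hpm, Nat.factorial_succ, pow_succ]; ring

/-- The Artin basis of `G(m,p,n)` has `m^n · n! / p` elements. -/
theorem artinSet_card (m p n : ℕ) (hm : 1 ≤ m) (hp : 1 ≤ p) (hn : 1 ≤ n) (hpm : p ∣ m) :
    (ArtinSet m p n).card * p = m ^ n * n.factorial :=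
  artinSet_card_general m p n hn hpm
end

section
/- For positive integers m, p with p | m and p > 1, each polynomial h_{j-1}(x_j^m,...,x_n^m) · (x_j ⋯ x_n)^{m/p} for j = 1,...,n lies in the ideal of ℂ[x_1,...,x_n] generated by the G(m,p,n)-invariant polynomials of positive degree, namely the ideal generated by f_i = ∑_{ℓ=1}^n x_ℓ^{mi} for 1 ≤ i ≤ n−1 together with f_n = (x_1 ⋯ x_n)^{m/p}. -/
/-!
Let `t = {x_1, …, x_{j-1}}` and let `s` be the remaining variables. Over the polynomial ring,
the power series `H_s(T) = ∑_d h_d(x_s) T^d` inverts `∏_{i ∈ s} (1 - x_i T)`, hence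
`∏_{all i} (1 - x_i T) · H_s(T) = ∏_{i ∈ t} (1 - x_i T)`. The left factor is `∑_k (-1)^k e_k T^k`,
so comparing coefficients of `T^{|t|}` gives `h_{|t|}(x_s) ≡ (-1)^{|t|} ∏_{i ∈ t} x_i` modulo
`e_1, …, e_{|t|}`, and by Newton's identities (in characteristic zero) modulo the power sums
`p_1, …, p_{|t|}`. Substituting `x_i ↦ x_i^m` turns `p_k` into `f_k`, while
`∏_{i ∈ t} x_i^m · ∏_{i ∈ s} x_i^{m/p}` is a multiple of `f_n = (x_1 ⋯ x_n)^{m/p}`.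
-/

open MvPolynomial

/-- `h_{j-1}(x_j^m, …, x_n^m)`, the complete homogeneous symmetric polynomial of degree `j-1`
in the variables `x_j, …, x_n` evaluated at `m`-th powers; here `j : Fin n` is the 0-indexed
version of the 1-indexed `j` of the statement (so the degree is `j.1`). -/
noncomputable def hsub (n m : ℕ) (j : Fin n) : MvPolynomial (Fin n) ℂ :=
  aeval (fun k : Fin n => (X k : MvPolynomial (Fin n) ℂ) ^ m)
    (rename (Subtype.val : {i : Fin n // j ≤ i} → Fin n) (hsymm {i : Fin n // j ≤ i} ℂ j.1))

open Finset

theorem Finset.sym_succ_insert {α : Type*} [DecidableEq α] {a : α} {s : Finset α} (ha : a ∉ s)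
    (n : ℕ) :
    (insert a s).sym (n + 1) = s.sym (n + 1) ∪ ((insert a s).sym n).image (Sym.cons a) := by
  ext μ
  by_cases haμ : a ∈ μ
  · obtain ⟨ν, rfl⟩ : ∃ ν, μ = a ::ₛ ν := ⟨_, (Sym.cons_erase haμ).symm⟩
    simp only [mem_union, mem_image, mem_sym_iff, mem_insert, Sym.mem_cons, Sym.cons_inj_right,
      forall_eq_or_imp, exists_eq_right, ha, false_and, false_or, true_or, true_and]
  · have : ∀ ν : Sym α n, a ::ₛ ν ≠ μ := fun ν h => haμ (h ▸ Sym.mem_cons_self a ν)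
    simp only [mem_union, mem_image, mem_sym_iff, mem_insert, this, and_false, exists_false,
      or_false]
    exact forall₂_congr fun x hx => or_iff_right (by rintro rfl; exact haμ hx)

theorem Finset.prod_pow_mul_prod_compl_pow {ι M : Type*} [Fintype ι] [DecidableEq ι]
    [CommMonoid M] (t : Finset ι) (f : ι → M) {a b : ℕ} (hab : a ≤ b) :
    (∏ i ∈ t, f i ^ b) * ∏ i ∈ tᶜ, f i ^ a = (∏ i ∈ t, f i ^ (b - a)) * (∏ i, f i) ^ a := by
  rw [← prod_pow, ← prod_mul_prod_compl t (fun i => f i ^ a), ← mul_assoc, ← prod_mul_distrib]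
  simp_rw [← pow_add, Nat.sub_add_cancel hab]

namespace PowerSeries

variable {ι A : Type*} [CommRing A]

theorem coeff_prod_one_add_C_mul_X (s : Finset ι) (a : ι → A) (k : ℕ) :
    coeff k (∏ i ∈ s, (1 + C (a i) * X)) = ∑ u ∈ s.powersetCard k, ∏ i ∈ u, a i := by
  simp_rw [prod_one_add, prod_mul_distrib, prod_const, ← map_prod, map_sum, coeff_C_mul_X_pow,
    powersetCard_eq_filter, sum_filter, eq_comm]

theorem coeff_prod_one_sub_C_mul_X (s : Finset ι) (a : ι → A) (k : ℕ) :
    coeff k (∏ i ∈ s, (1 - C (a i) * X)) = (-1) ^ k * ∑ u ∈ s.powersetCard k, ∏ i ∈ u, a i := by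
  simp_rw [sub_eq_add_neg, ← neg_mul, ← map_neg, coeff_prod_one_add_C_mul_X, prod_neg, mul_sum]
  exact sum_congr rfl fun u hu => by rw [(mem_powersetCard.mp hu).2]

end PowerSeries

namespace MvPolynomial

section CommRing

variable {σ : Type*} [DecidableEq σ] (R : Type*) [CommRing R]

noncomputable def hsymmOn (s : Finset σ) (d : ℕ) : MvPolynomial σ R :=
  ∑ μ ∈ s.sym d, ((μ : Multiset σ).map X).prod

@[simp]
theorem hsymmOn_zero (s : Finset σ) : hsymmOn R s 0 = 1 := by
  rw [hsymmOn, sym_zero, sum_singleton]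
  rfl

@[simp]
theorem hsymmOn_empty_succ (d : ℕ) : hsymmOn R (∅ : Finset σ) (d + 1) = 0 := by
  simp [hsymmOn]

variable {R}

theorem hsymmOn_insert_succ {a : σ} {s : Finset σ} (ha : a ∉ s) (d : ℕ) :
    hsymmOn R (insert a s) (d + 1) = hsymmOn R s (d + 1) + X a * hsymmOn R (insert a s) d := by
  have hdisj : Disjoint (s.sym (d + 1)) (((insert a s).sym d).image (Sym.cons a)) := by
    simp only [disjoint_left, mem_image, mem_sym_iff, not_exists, not_and]
    rintro _ hμ ν - rfl
    exact ha (hμ a (Sym.mem_cons_self a ν))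
  unfold hsymmOn
  rw [sym_succ_insert ha, sum_union hdisj, sum_image fun _ _ _ _ => (Sym.cons_inj_right a _ _).mp,
    mul_sum]
  congr 1
  refine sum_congr rfl fun ν _ => ?_
  rw [Sym.coe_cons, Multiset.map_cons, Multiset.prod_cons]

theorem rename_subtypeVal_hsymm [Fintype σ] (p : σ → Prop) [DecidablePred p] (d : ℕ) :
    rename (Subtype.val : {i // p i} → σ) (hsymm {i // p i} R d) =
      hsymmOn R (univ.filter p) d := by
  rw [← univ_map_subtype, hsymmOn, sym_map, sum_map, hsymm, map_sum, ← sym_univ]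
  refine sum_congr rfl fun μ _ => ?_
  simp [map_multiset_prod, Multiset.map_map, Sym.val_eq_coe]

theorem one_sub_C_X_mul_mk_hsymmOn_insert {a : σ} {s : Finset σ} (ha : a ∉ s) :
    (1 - PowerSeries.C (X a) * PowerSeries.X) * PowerSeries.mk (hsymmOn R (insert a s)) =
      PowerSeries.mk (hsymmOn R s) := by
  ext (_ | d) <;> simp [sub_mul, mul_assoc, PowerSeries.coeff_succ_X_mul, hsymmOn_insert_succ ha]

theorem prod_one_sub_C_X_mul_mk_hsymmOn (s : Finset σ) :
    (∏ i ∈ s, (1 - PowerSeries.C (X i) * PowerSeries.X)) * PowerSeries.mk (hsymmOn R s) = 1 := by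
  induction s using Finset.induction_on with
  | empty => ext (_ | d) <;> simp
  | insert a s ha ih =>
    rw [prod_insert ha, mul_comm (1 - _), mul_assoc, one_sub_C_X_mul_mk_hsymmOn_insert ha, ih]

theorem hsymmOn_compl_sub_mem_span_esymm [Fintype σ] (t : Finset σ) (d : ℕ) :
    hsymmOn R tᶜ d - (-1) ^ d * ∑ u ∈ t.powersetCard d, ∏ i ∈ u, X i ∈
      Ideal.span (esymm σ R '' Set.Icc 1 d) := by
  have hprod : (∏ i, (1 - PowerSeries.C (X i) * PowerSeries.X)) * PowerSeries.mk (hsymmOn R tᶜ) =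
      ∏ i ∈ t, (1 - PowerSeries.C (X i) * PowerSeries.X) := by
    rw [← prod_mul_prod_compl t, mul_assoc, prod_one_sub_C_X_mul_mk_hsymmOn, mul_one]
  have hcoeff := congrArg (PowerSeries.coeff d) hprod
  rw [PowerSeries.coeff_mul, Nat.sum_antidiagonal_eq_sum_range_succ_mk, sum_range_succ'] at hcoeff
  simp only [PowerSeries.coeff_prod_one_sub_C_mul_X, PowerSeries.coeff_mk, powersetCard_zero,
    sum_singleton, prod_empty, pow_zero, mul_one, one_mul, Nat.sub_zero] at hcoeff
  rw [← hcoeff, sub_add_cancel_right]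
  refine neg_mem <| Ideal.sum_mem _ fun k hk => Ideal.mul_mem_right _ _ (Ideal.mul_mem_left _ _ ?_)
  exact Ideal.subset_span ⟨k + 1, ⟨by omega, by simpa using hk⟩, rfl⟩

end CommRing

section CharZero

variable {σ R : Type*} [Fintype σ] [Field R] [CharZero R]

theorem esymm_mem_span_psum {k : ℕ} (hk : 0 < k) :
    esymm σ R k ∈ Ideal.span (psum σ R '' Set.Icc 1 k) := by
  have hunit : IsUnit (k : MvPolynomial σ R) := by
    simpa using (isUnit_iff_ne_zero.mpr (Nat.cast_ne_zero.mpr hk.ne' : (k : R) ≠ 0)).map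
      (C : R →+* MvPolynomial σ R)
  rw [← Ideal.unit_mul_mem_iff_mem _ hunit, mul_esymm_eq_sum]
  refine Ideal.mul_mem_left _ _ (Ideal.sum_mem _ fun a ha => Ideal.mul_mem_left _ _ ?_)
  rw [mem_filter, HasAntidiagonal.mem_antidiagonal] at ha
  exact Ideal.subset_span ⟨a.2, ⟨by omega, by omega⟩, rfl⟩

theorem hsymmOn_compl_sub_mem_span_psum [DecidableEq σ] (t : Finset σ) (d : ℕ) :
    hsymmOn R tᶜ d - (-1) ^ d * ∑ u ∈ t.powersetCard d, ∏ i ∈ u, X i ∈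
      Ideal.span (psum σ R '' Set.Icc 1 d) := by
  refine Ideal.span_le.mpr ?_ (hsymmOn_compl_sub_mem_span_esymm t d)
  rintro _ ⟨k, hk, rfl⟩
  exact Ideal.span_mono (Set.image_mono (Set.Icc_subset_Icc le_rfl hk.2)) (esymm_mem_span_psum hk.1)

end CharZero

end MvPolynomial

theorem hsub_mul_mem_invariant_ideal_general (n m p : ℕ) (j : Fin n) :
    hsub n m j * ∏ i ∈ Finset.univ.filter (fun i : Fin n => j ≤ i), (X i : MvPolynomial (Fin n) ℂ) ^ (m / p)
      ∈ Ideal.span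
        ((Set.range fun i : Fin (n - 1) =>
            ∑ ℓ : Fin n, (X ℓ : MvPolynomial (Fin n) ℂ) ^ (m * (i.1 + 1))) ∪
          {(∏ ℓ : Fin n, (X ℓ : MvPolynomial (Fin n) ℂ)) ^ (m / p)}) := by
  set I := Ideal.span ((Set.range fun i : Fin (n - 1) =>
    ∑ ℓ : Fin n, (X ℓ : MvPolynomial (Fin n) ℂ) ^ (m * (i.1 + 1))) ∪
      {(∏ ℓ : Fin n, (X ℓ : MvPolynomial (Fin n) ℂ)) ^ (m / p)})
  set φ : MvPolynomial (Fin n) ℂ →ₐ[ℂ] MvPolynomial (Fin n) ℂ := aeval fun k => X k ^ m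
  have hcompl : univ.filter (fun i : Fin n => j ≤ i) = (Iio j)ᶜ := by ext; simp
  have hcong := hsymmOn_compl_sub_mem_span_psum (R := ℂ) (Iio j) j
  rw [← Fin.card_Iio j, powersetCard_self, sum_singleton, Fin.card_Iio] at hcong
  have hmap : Ideal.map φ (Ideal.span (psum (Fin n) ℂ '' Set.Icc 1 j)) ≤ I := by
    rw [Ideal.map_span, Ideal.span_le]
    rintro _ ⟨_, ⟨k, ⟨hk₁, hk₂⟩, rfl⟩, rfl⟩
    refine Ideal.subset_span (Or.inl ⟨⟨k - 1, by have := j.isLt; omega⟩, ?_⟩)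
    simp [φ, psum, pow_mul, Nat.sub_add_cancel hk₁]
  have hsplit : hsub n m j = φ (hsymmOn ℂ (Iio j)ᶜ j - (-1) ^ j.1 * ∏ i ∈ Iio j, X i) +
      (-1) ^ j.1 * ∏ i ∈ Iio j, X i ^ m := by
    simp [hsub, φ, rename_subtypeVal_hsymm, hcompl]
  rw [hsplit, hcompl, add_mul, mul_assoc, prod_pow_mul_prod_compl_pow _ _ (Nat.div_le_self m p)]
  exact Ideal.add_mem _ (Ideal.mul_mem_right _ _ (hmap (Ideal.mem_map_of_mem φ hcong)))
    (Ideal.mul_mem_left _ _ (Ideal.mul_mem_left _ _ (Ideal.subset_span (Or.inr rfl))))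

/-- For `p ∣ m`, `p > 1`, each `h_{j-1}(x_j^m,…,x_n^m)·(x_j⋯x_n)^{m/p}` lies in the ideal
generated by the basic invariants `f_i = ∑_ℓ x_ℓ^{mi}` (`1 ≤ i ≤ n-1`) and
`f_n = (x_1⋯x_n)^{m/p}` of `G(m,p,n)`. -/
theorem hsub_mul_mem_invariant_ideal (n m p : ℕ) (hp : 1 < p) (hpm : p ∣ m) (j : Fin n) :
    hsub n m j * ∏ i ∈ Finset.univ.filter (fun i : Fin n => j ≤ i), (X i : MvPolynomial (Fin n) ℂ) ^ (m / p)
      ∈ Ideal.span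
        ((Set.range fun i : Fin (n - 1) =>
            ∑ ℓ : Fin n, (X ℓ : MvPolynomial (Fin n) ℂ) ^ (m * (i.1 + 1))) ∪
          {(∏ ℓ : Fin n, (X ℓ : MvPolynomial (Fin n) ℂ)) ^ (m / p)}) :=
  hsub_mul_mem_invariant_ideal_general n m p j
end

section
/- For all 1 ≤ j ≤ n and all k ≥ j, the polynomial h_k(x_j^m,...,x_n^m) lies in the ideal of ℂ[x_1,...,x_n] generated by the power sums p_i = ∑_{ℓ=1}^n x_ℓ^{mi} for i ≥ 1 (equivalently, the ideal generated by all symmetric polynomials in x_1^m,...,x_n^m of positive degree). -/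
open MvPolynomial

/-- `h_k(x_j^m, …, x_n^m)`: the complete homogeneous symmetric polynomial of degree `k` in the
variables `x_j, …, x_n` (here `j : Fin n` is 0-indexed) evaluated at `m`-th powers. -/
noncomputable def hsubk (n m : ℕ) (j : Fin n) (k : ℕ) : MvPolynomial (Fin n) ℂ :=
  aeval (fun ℓ : Fin n => (X ℓ : MvPolynomial (Fin n) ℂ) ^ m)
    (rename (Subtype.val : {i : Fin n // j ≤ i} → Fin n) (hsymm {i : Fin n // j ≤ i} ℂ k))

/-!
Write `h_k(S)` for the complete homogeneous symmetric polynomial in a set `S` of variables.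
Splitting the monomials of `h_{k+1}(S ∪ {a})` according to whether they contain `x_a` gives
`h_{k+1}(S) = h_{k+1}(S ∪ {a}) - x_a h_k(S ∪ {a})`. Adding the missing variables one at a time
therefore reduces `h_k(S)`, as long as fewer than `k` variables are missing, to complete
homogeneous polynomials of positive degree in all variables. Those are symmetric without constant
term, hence (fundamental theorem and Newton's identities, over a `ℚ`-algebra) in the ideal
generated by the power sums. Substituting `x_ℓ ↦ x_ℓ^m` finishes the proof.
-/

namespace MvPolynomial

open Finset

variable {σ R : Type*}

section PowerSums

variable [Fintype σ] [CommRing R]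

variable (σ R) in
noncomputable def psumIdeal : Ideal (MvPolynomial σ R) :=
  Ideal.span (Set.range fun i : ℕ => psum σ R (i + 1))

lemma psum_mem_psumIdeal {k : ℕ} (hk : k ≠ 0) : psum σ R k ∈ psumIdeal σ R :=
  Ideal.subset_span ⟨k - 1, congrArg (psum σ R) (Nat.succ_pred_eq_of_ne_zero hk)⟩

lemma psumIdeal_le_ker_constantCoeff :
    psumIdeal σ R ≤ RingHom.ker (constantCoeff (σ := σ) (R := R)) := by
  rw [psumIdeal, Ideal.span_le]
  rintro _ ⟨i, rfl⟩
  simp [psum]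

lemma esymm_mem_psumIdeal [Algebra ℚ R] {k : ℕ} (hk : k ≠ 0) :
    esymm σ R k ∈ psumIdeal σ R := by
  have hunit : IsUnit (k : MvPolynomial σ R) := by
    simpa using (isUnit_iff_ne_zero.2 (Nat.cast_ne_zero.2 hk : (k : ℚ) ≠ 0)).map
      (algebraMap ℚ (MvPolynomial σ R))
  rw [← Ideal.unit_mul_mem_iff_mem _ hunit, mul_esymm_eq_sum]
  refine Ideal.mul_mem_left _ _ (Ideal.sum_mem _ fun a ha => Ideal.mul_mem_left _ _ ?_)
  simp only [mem_filter, HasAntidiagonal.mem_antidiagonal] at ha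
  exact psum_mem_psumIdeal (by omega)

lemma IsSymmetric.mem_psumIdeal [Algebra ℚ R] {p : MvPolynomial σ R}
    (hp : p.IsSymmetric) (h0 : constantCoeff p = 0) : p ∈ psumIdeal σ R := by
  obtain ⟨q, hq⟩ := esymmAlgHom_surjective R le_rfl ⟨p, hp⟩
  have hpq : aeval (fun i : Fin (Fintype.card σ) => esymm σ R (i + 1)) q = p := by
    rw [← esymmAlgHom_apply, hq]
  -- modulo the ideal every `esymm` vanishes, so `p` reduces to the constant term of `q`
  have hquot : Ideal.Quotient.mkₐ R (psumIdeal σ R) p =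
      Ideal.Quotient.mkₐ R (psumIdeal σ R) (MvPolynomial.C (constantCoeff q)) := by
    rw [← hpq, comp_aeval_apply]
    simp_rw [Ideal.Quotient.mkₐ_eq_mk, Ideal.Quotient.eq_zero_iff_mem.2
      (esymm_mem_psumIdeal (Nat.succ_ne_zero _)), aeval_zero']
    rfl
  have hsub := Ideal.Quotient.eq.1 hquot
  have hq0 : constantCoeff q = 0 := by
    simpa [h0] using psumIdeal_le_ker_constantCoeff hsub
  simpa [hq0] using hsub

lemma map_aeval_X_pow_psumIdeal (m : ℕ) :
    (psumIdeal σ R).map (aeval fun ℓ : σ => (X ℓ : MvPolynomial σ R) ^ m) =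
      Ideal.span
        (Set.range fun i : ℕ => ∑ ℓ : σ, (X ℓ : MvPolynomial σ R) ^ (m * (i + 1))) := by
  rw [psumIdeal, Ideal.map_span, ← Set.range_comp]
  congr! with i
  simp [psum, pow_mul]

end PowerSums

section CompleteHomogeneous

variable [DecidableEq σ] [CommSemiring R]

lemma constantCoeff_hsymm [Fintype σ] {k : ℕ} (hk : k ≠ 0) :
    constantCoeff (hsymm σ R k) = 0 := by
  obtain ⟨k, rfl⟩ := Nat.exists_eq_succ_of_ne_zero hk
  refine (map_sum _ _ _).trans (sum_eq_zero fun s _ => ?_)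
  obtain ⟨a, ha⟩ := s.exists_mem
  rw [map_multiset_prod]
  exact Multiset.prod_eq_zero
    (Multiset.mem_map.2 ⟨X a, Multiset.mem_map_of_mem X ha, constantCoeff_X _ a⟩)

lemma hsymm_option_succ [Fintype σ] (k : ℕ) :
    hsymm (Option σ) R (k + 1) =
      X none * hsymm (Option σ) R k + rename some (hsymm σ R (k + 1)) := by
  rw [hsymm, ← symOptionSuccEquiv.symm.sum_comp, Fintype.sum_sum_type, hsymm, hsymm, mul_sum,
    map_sum]
  congr 1
  · simp [symOptionSuccEquiv, Sym.coe_cons]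
  · simp [symOptionSuccEquiv, map_multiset_prod, Multiset.map_map]

lemma rename_hsymm_insert_succ {s : Finset σ} {a : σ} (ha : a ∉ s) (k : ℕ) :
    rename ((↑) : ↥(insert a s) → σ) (hsymm (↥(insert a s)) R (k + 1)) =
      X a * rename ((↑) : ↥(insert a s) → σ) (hsymm (↥(insert a s)) R k) +
        rename ((↑) : s → σ) (hsymm s R (k + 1)) := by
  simp_rw [← rename_hsymm _ _ _ (subtypeInsertEquivOption ha).symm, rename_rename,
    hsymm_option_succ, map_add, map_mul, rename_rename, rename_X]
  rfl

end CompleteHomogeneous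

theorem rename_hsymm_mem_psumIdeal [Fintype σ] [DecidableEq σ] [CommRing R] [Algebra ℚ R]
    (s : Finset σ) {k : ℕ} (hk : #sᶜ < k) :
    rename ((↑) : s → σ) (hsymm s R k) ∈ psumIdeal σ R := by
  induction hc : #sᶜ generalizing s k with
  | zero =>
    have hs : ∀ x, x ∈ s := by simpa [eq_empty_iff_forall_notMem] using hc
    have huniv : rename ((↑) : s → σ) (hsymm s R k) = hsymm σ R k :=
      rename_hsymm _ R k (Equiv.subtypeUnivEquiv hs)
    rw [huniv]
    exact (hsymm_isSymmetric σ R k).mem_psumIdeal (constantCoeff_hsymm (by omega))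
  | succ c ih =>
    obtain ⟨a, ha⟩ : sᶜ.Nonempty := card_pos.1 (by omega)
    obtain ⟨k, rfl⟩ : ∃ k', k = k' + 1 := ⟨k - 1, by omega⟩
    have hca : #(insert a s)ᶜ = c := by
      rw [compl_insert, card_erase_of_mem ha, hc, Nat.add_sub_cancel]
    rw [eq_sub_of_add_eq' (rename_hsymm_insert_succ (R := R) (mem_compl.1 ha) k).symm]
    exact sub_mem (ih _ (by omega) hca) (Ideal.mul_mem_left _ _ (ih _ (by omega) hca))

end MvPolynomial

theorem hsubk_mem_power_sum_ideal_general (n m : ℕ) (j : Fin n) (k : ℕ)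
    (hk : j.1 + 1 ≤ k) :
    hsubk n m j k ∈ Ideal.span
      (Set.range fun i : ℕ => ∑ ℓ : Fin n, (X ℓ : MvPolynomial (Fin n) ℂ) ^ (m * (i + 1))) := by
  have hIci :
      rename (Subtype.val : {i : Fin n // j ≤ i} → Fin n) (hsymm {i : Fin n // j ≤ i} ℂ k) =
        rename ((↑) : Finset.Ici j → Fin n) (hsymm (Finset.Ici j) ℂ k) := by
    rw [← rename_hsymm _ ℂ k (Equiv.subtypeEquivRight fun i => Finset.mem_Ici.symm),
      rename_rename]
    rfl
  have hcard : (Finset.Ici j)ᶜ.card < k := by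
    rw [show (Finset.Ici j)ᶜ = Finset.Iio j by ext; simp, Fin.card_Iio]
    omega
  rw [hsubk, hIci, ← map_aeval_X_pow_psumIdeal]
  exact Ideal.mem_map_of_mem _ (rename_hsymm_mem_psumIdeal _ hcard)

/-- For `1 ≤ j ≤ n` and `k ≥ j` (1-indexed; here `j : Fin n` is 0-indexed, so the hypothesis
is `k ≥ j.1 + 1`), `h_k(x_j^m,…,x_n^m)` lies in the ideal generated by the power sums
`p_i = ∑_ℓ x_ℓ^{mi}`, `i ≥ 1`. -/
theorem hsubk_mem_power_sum_ideal (n m : ℕ) (hm : 1 ≤ m) (j : Fin n) (k : ℕ)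
    (hk : j.1 + 1 ≤ k) :
    hsubk n m j k ∈ Ideal.span
      (Set.range fun i : ℕ => ∑ ℓ : Fin n, (X ℓ : MvPolynomial (Fin n) ℂ) ^ (m * (i + 1))) :=
  hsubk_mem_power_sum_ideal_general n m j k hk
end
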